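/- Every weakly coherently δ-normal (wcδn) space is mδδn, i.e., admits a monotone operator separating disjoint pairs of regular Gδ sets. -/
import Mathlib


def IsRegGDelta {X : Type*} [TopologicalSpace X] (D : Set X) : Prop :=
  ∃ U : ℕ → Set X, (∀ n, IsOpen (U n)) ∧ (∀ n, D ⊆ U n) ∧ D = ⋂ n, closure (U n)

def Wcdn (X : Type*) [TopologicalSpace X] : Prop :=
  ∃ φ : Set X → Set X → Set X,
    (∀ L U, IsRegGDelta L → IsOpen U → L ⊆ U → IsOpen (φ L U) ∧ L ⊆ φ L U) ∧
    (∀ L U K V, IsRegGDelta L → IsOpen U → L ⊆ U → IsRegGDelta K → IsOpen V → K ⊆ V →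
      (φ L U ∩ φ K V).Nonempty → (L ∩ V).Nonempty ∨ (K ∩ U).Nonempty)

def Mddn (X : Type*) [TopologicalSpace X] : Prop :=
  ∃ H : Set X → Set X → Set X,
    (∀ L K, IsRegGDelta L → IsRegGDelta K → Disjoint L K →
      IsOpen (H L K) ∧ L ⊆ H L K ∧ closure (H L K) ⊆ Kᶜ) ∧
    (∀ L K L' K', IsRegGDelta L → IsRegGDelta K → Disjoint L K →
      IsRegGDelta L' → IsRegGDelta K' → Disjoint L' K' →
      L ⊆ L' → K' ⊆ K → H L K ⊆ H L' K')

lemma IsRegGDelta.isClosed {X : Type*} [TopologicalSpace X] {D : Set X}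
    (hD : IsRegGDelta D) : IsClosed D := by
  obtain ⟨U, -, -, hEq⟩ := hD
  rw [hEq]
  exact isClosed_iInter fun n => isClosed_closure

theorem stmt_10 {X : Type*} [TopologicalSpace X] (h : Wcdn X) : Mddn X := by
  obtain ⟨φ, hφ1, hφ2⟩ := h
  refine ⟨fun L K => ⋃₀ { S | ∃ L' K', IsRegGDelta L' ∧ IsRegGDelta K' ∧ Disjoint L' K' ∧
      L' ⊆ L ∧ K ⊆ K' ∧ S = φ L' K'ᶜ }, ?_, ?_⟩
  · intro L K hL hK hdisj
    have hsub : ∀ {L' K' : Set X}, Disjoint L' K' → IsRegGDelta K' → L' ⊆ K'ᶜ := by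
      intro L' K' hd _
      exact hd.subset_compl_right
    refine ⟨isOpen_sUnion ?_, ?_, ?_⟩
    · rintro S ⟨L', K', hL', hK', hd, -, -, rfl⟩
      exact (hφ1 L' K'ᶜ hL' hK'.isClosed.isOpen_compl (hsub hd hK')).1
    · intro x hx
      exact ⟨φ L Kᶜ, ⟨L, K, hL, hK, hdisj, subset_rfl, subset_rfl, rfl⟩,
        (hφ1 L Kᶜ hL hK.isClosed.isOpen_compl (hsub hdisj hK)).2 hx⟩
    · -- each point of K has an open nbhd φ(K, Lᶜ) disjoint from the union
      intro x hx hxK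
      have hKL : K ⊆ Lᶜ := hdisj.symm.subset_compl_right
      have hW := hφ1 K Lᶜ hK hL.isClosed.isOpen_compl hKL
      have hdisjW : Disjoint (φ K Lᶜ) (⋃₀ { S | ∃ L' K', IsRegGDelta L' ∧ IsRegGDelta K' ∧
          Disjoint L' K' ∧ L' ⊆ L ∧ K ⊆ K' ∧ S = φ L' K'ᶜ }) := by
        rw [Set.disjoint_sUnion_right]
        rintro S ⟨L', K', hL', hK', hd, hL'L, hKK', rfl⟩
        rw [Set.disjoint_iff_inter_eq_empty, ← Set.not_nonempty_iff_eq_empty]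
        intro hne
        rcases hφ2 K Lᶜ L' K'ᶜ hK hL.isClosed.isOpen_compl hKL hL' hK'.isClosed.isOpen_compl
            (hsub hd hK') hne with ⟨y, hy1, hy2⟩ | ⟨y, hy1, hy2⟩
        · exact hy2 (hKK' hy1)
        · exact hy2 (hL'L hy1)
      have := mem_closure_iff.mp hx (φ K Lᶜ) hW.1 (hW.2 hxK)
      rw [Set.disjoint_iff_inter_eq_empty] at hdisjW
      exact Set.not_nonempty_iff_eq_empty.mpr hdisjW this
  · intro L K L' K' _ _ _ _ _ _ hLL' hK'K
    apply Set.sUnion_subset_sUnion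
    rintro S ⟨A, B, hA, hB, hd, hAL, hKB, rfl⟩
    exact ⟨A, B, hA, hB, hd, hAL.trans hLL', hK'K.trans hKB, rfl⟩
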